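/- For all k ≥ 3 and all x_1,…,x_k ∈ H_n, (k-2) · m(x_1,…,x_k) ≤ 2 · ∑_{i=1}^k m(x_1,…,x_{i-1},x_{i+1},…,x_k), where the i-th summand is the inertia of the (k-1)-tuple obtained by deleting x_i. (Equivalently, r̄(x_1,…,x_k) ≤ (2(k-1)/(k(k-2))) ∑_{i=1}^k r̄ of the deleted tuples.) -/

import Mathlib

/-!
Both sides split over coordinates: the sum of distances to a centre `y` is a sum of independent
per-coordinate costs, so an optimal centre is a coordinatewise majority vote and the inertia is
`∑_c min (#ones in column c) (#zeros in column c)`. It therefore suffices to treat a single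
column with `A` ones and `B` zeros, `A + B = k`: deleting a one leaves inertia `min (A - 1) B`,
deleting a zero `min A (B - 1)`, and
`(k - 2) * min A B ≤ 2 * (A * min (A - 1) B + B * min A (B - 1))`
follows by comparing the cases `A = B` and `A < B`.
-/

/-- The inertia of a `k`-tuple of points of `H_n`: `min_y ∑ᵢ d(y, xᵢ)`
(the average radius is the inertia divided by `k`). -/
def inertia {n k : ℕ} (x : Fin k → Fin n → ZMod 2) : ℕ :=
  Finset.inf' Finset.univ Finset.univ_nonempty
    (fun y : Fin n → ZMod 2 => ∑ i, hammingDist y (x i))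

open Finset

theorem Finset.inf'_univ_pi_sum {ι α M : Type*} [Fintype ι] [DecidableEq ι] [Fintype α]
    [Nonempty α] [AddCommMonoid M] [LinearOrder M] [IsOrderedAddMonoid M] (F : ι → α → M) :
    univ.inf' univ_nonempty (fun y : ι → α => ∑ c, F c (y c)) =
      ∑ c, univ.inf' univ_nonempty (F c) := by
  refine le_antisymm ?_ (le_inf' _ _ fun y _ => sum_le_sum fun c _ => inf'_le _ (mem_univ _))
  choose b _ hb using fun c => exists_mem_eq_inf' univ_nonempty (F c)
  simpa only [hb] using inf'_le (fun y : ι → α => ∑ c, F c (y c)) (mem_univ b)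

theorem ZMod.inf'_univ_two {M : Type*} [LinearOrder M] (f : ZMod 2 → M) :
    univ.inf' univ_nonempty f = min (f 0) (f 1) := by
  refine le_antisymm (le_min (inf'_le _ (mem_univ _)) (inf'_le _ (mem_univ _))) ?_
  refine le_inf' _ _ fun b _ => ?_
  fin_cases b
  exacts [min_le_left _ _, min_le_right _ _]

theorem zmod_two_ne_one_iff (b : ZMod 2) : b ≠ 1 ↔ b = 0 := by
  revert b; decide

theorem Fin.card_filter_succAbove {m : ℕ} (p : Fin (m + 1) → Prop) [DecidablePred p]
    (i : Fin (m + 1)) :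
    #{j : Fin m | p (i.succAbove j)} = #{j | p j} - if p i then 1 else 0 := by
  rw [card_filter, card_filter, Fin.sum_univ_succAbove _ i]
  omega

def bitInertia {k : ℕ} (v : Fin k → ZMod 2) : ℕ :=
  min #{i | v i ≠ 0} #{i | v i ≠ 1}

theorem inertia_eq_sum_bitInertia {n k : ℕ} (x : Fin k → Fin n → ZMod 2) :
    inertia x = ∑ c, bitInertia (fun i => x i c) := by
  have hcost : ∀ y : Fin n → ZMod 2,
      ∑ i, hammingDist y (x i) = ∑ c, #{i | x i c ≠ y c} := by
    intro y
    simp only [hammingDist, card_filter]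
    rw [sum_comm]
    simp only [ne_comm]
  simp only [inertia, hcost, inf'_univ_pi_sum (fun c b => #{i | x i c ≠ b}), ZMod.inf'_univ_two,
    bitInertia]

theorem card_ne_zero_add_card_ne_one {k : ℕ} (v : Fin k → ZMod 2) :
    #{i | v i ≠ 0} + #{i | v i ≠ 1} = k := by
  simpa only [ne_eq, not_not, ← zmod_two_ne_one_iff, card_univ, Fintype.card_fin]
    using card_filter_add_card_filter_not (s := univ) fun i => v i ≠ 0

theorem bitInertia_succAbove {m : ℕ} (v : Fin (m + 1) → ZMod 2) (i : Fin (m + 1)) :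
    bitInertia (fun j => v (i.succAbove j)) =
      min (#{i | v i ≠ 0} - if v i ≠ 0 then 1 else 0)
        (#{i | v i ≠ 1} - if v i ≠ 1 then 1 else 0) := by
  rw [bitInertia, Fin.card_filter_succAbove (fun j => v j ≠ 0),
    Fin.card_filter_succAbove (fun j => v j ≠ 1)]

theorem sum_bitInertia_succAbove {m : ℕ} (v : Fin (m + 1) → ZMod 2) :
    ∑ i : Fin (m + 1), bitInertia (fun j => v (i.succAbove j)) =
      #{i | v i ≠ 0} * min (#{i | v i ≠ 0} - 1) #{i | v i ≠ 1} +
        #{i | v i ≠ 1} * min #{i | v i ≠ 0} (#{i | v i ≠ 1} - 1) := by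
  have hne_one_iff : ∀ i, v i ≠ 1 ↔ ¬v i ≠ 0 := fun i => by
    rw [zmod_two_ne_one_iff, not_not]
  have hone : ∀ i, v i ≠ 0 → bitInertia (fun j => v (i.succAbove j)) =
      min (#{i | v i ≠ 0} - 1) #{i | v i ≠ 1} := fun i hi => by
    rw [bitInertia_succAbove, if_pos hi, if_neg (by rwa [hne_one_iff, not_not]), Nat.sub_zero]
  have hzero : ∀ i, v i ≠ 1 → bitInertia (fun j => v (i.succAbove j)) =
      min #{i | v i ≠ 0} (#{i | v i ≠ 1} - 1) := fun i hi => by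
    rw [bitInertia_succAbove, if_pos hi, if_neg ((hne_one_iff i).1 hi), Nat.sub_zero]
  rw [← sum_filter_add_sum_filter_not univ fun i => v i ≠ 0,
    sum_congr rfl fun i hi => hone i (mem_filter.1 hi).2,
    sum_congr rfl fun i hi => hzero i ((hne_one_iff i).2 (mem_filter.1 hi).2),
    sum_const, sum_const, smul_eq_mul, smul_eq_mul]
  simp only [hne_one_iff]

theorem sub_one_mul_min_le {m A B : ℕ} (hAB : A + B = m + 1) :
    (m - 1) * min A B ≤ 2 * (A * min (A - 1) B + B * min A (B - 1)) := by
  wlog hle : A ≤ B generalizing A B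
  · have := this (A := B) (B := A) (by omega) (by omega)
    rwa [min_comm B A, min_comm (B - 1) A, min_comm B (A - 1), add_comm (B * _)] at this
  rcases hle.eq_or_lt with rfl | hlt
  · obtain ⟨a, rfl⟩ : ∃ a, A = a + 1 := ⟨A - 1, by omega⟩
    obtain rfl : m = 2 * a + 1 := by omega
    simp only [min_self, Nat.add_sub_cancel, min_eq_left (Nat.le_succ a),
      min_eq_right (Nat.le_succ a)]
    nlinarith
  · rw [min_eq_left hle, min_eq_left (by omega : A - 1 ≤ B),
      min_eq_left (by omega : A ≤ B - 1),
      show 2 * (A * (A - 1) + B * A) = 2 * (A - 1 + B) * A by ring]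
    exact Nat.mul_le_mul_right A (by omega)

theorem sub_one_mul_bitInertia_le {m : ℕ} (v : Fin (m + 1) → ZMod 2) :
    (m - 1) * bitInertia v ≤
      2 * ∑ i : Fin (m + 1), bitInertia (fun j => v (i.succAbove j)) := by
  rw [sum_bitInertia_succAbove]
  exact sub_one_mul_min_le (card_ne_zero_add_card_ne_one v)

theorem inertia_le_two_mul_sum_deleted_general {n m : ℕ}
    (x : Fin (m + 1) → Fin n → ZMod 2) :
    (m - 1) * inertia x ≤
      2 * ∑ i : Fin (m + 1), inertia (fun j : Fin m => x (i.succAbove j)) := by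
  simp only [inertia_eq_sum_bitInertia]
  rw [sum_comm, mul_sum, mul_sum]
  exact sum_le_sum fun c _ => sub_one_mul_bitInertia_le fun i => x i c

/-- For a `(m+1)`-tuple with `m+1 ≥ 3`:
`(k-2)·m(x) ≤ 2·∑ᵢ m(x with xᵢ deleted)` where `k = m+1`. -/
theorem inertia_le_two_mul_sum_deleted {n m : ℕ} (hm : 2 ≤ m)
    (x : Fin (m + 1) → Fin n → ZMod 2) :
    (m - 1) * inertia x ≤
      2 * ∑ i : Fin (m + 1), inertia (fun j : Fin m => x (i.succAbove j)) :=
  inertia_le_two_mul_sum_deleted_general x
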